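/- arXiv:1804.04364 — 2 statements merged into one kernel-verified Lean document; each statement's English description precedes it below -/
import Mathlib

section
/- If there exists a (3,λ)-LGDD of type g^u, then u ≥ 3, 1 ≤ λ ≤ g(u−2), λg(u−1) ≡ 0 (mod 2), λg²u(u−1) ≡ 0 (mod 6), and g(u−2) ≡ 0 (mod λ). -/
open Finset
open scoped Classical

/-- `Gr` is a partition of the point set `X` into `u` groups, each of size `g`. -/
def IsGroupPartition {X : Type} (g u : ℕ) (Gr : Fin u → Finset X) : Prop :=
  (∀ i, (Gr i).card = g) ∧ (∀ x : X, ∃! i, x ∈ Gr i)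

/-- `B` is the block multiset of a `(3,lam)`-GDD with group partition `Gr`:
every block is a 3-subset meeting each group in at most one point, and every
pair of points from distinct groups lies in exactly `lam` blocks. -/
def IsGDDBlocks {X : Type} {u : ℕ} (lam : ℕ) (Gr : Fin u → Finset X)
    (B : Multiset (Finset X)) : Prop :=
  (∀ b ∈ B, b.card = 3 ∧ ∀ i, (b ∩ Gr i).card ≤ 1) ∧
  (∀ x y : X, x ≠ y → (∀ i, ¬(x ∈ Gr i ∧ y ∈ Gr i)) →
    (B.filter (fun b => x ∈ b ∧ y ∈ b)).card = lam)

/-- There exists a simple `(3,lam)`-GDD of type `g^u`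
(simplicity: the blocks form a `Finset`, i.e. no repeated blocks). -/
def SimpleGDDExists (g u lam : ℕ) : Prop :=
  ∃ (X : Type) (Gr : Fin u → Finset X) (B : Finset (Finset X)),
    IsGroupPartition g u Gr ∧ IsGDDBlocks lam Gr B.val

/-- There exists a `(3,lam)`-LGDD of type `g^u`: a (nonempty) collection of
`g*(u-2)/lam` pairwise disjoint simple `(3,lam)`-GDDs of type `g^u` on a common
point set and group set. -/
def LGDDExists (g u lam : ℕ) : Prop :=
  ∃ (X : Type) (Gr : Fin u → Finset X) (N : ℕ) (Bs : Fin N → Finset (Finset X)),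
    0 < N ∧ N * lam = g * (u - 2) ∧ IsGroupPartition g u Gr ∧
    (∀ r, IsGDDBlocks lam Gr (Bs r).val) ∧
    (∀ r s, r ≠ s → Disjoint (Bs r) (Bs s))

/-- Necessary conditions for the existence of a (3,λ)-LGDD of type g^u. -/
theorem LGDD_necessary (g u lam : ℕ) (hlam : 0 < lam) (h : LGDDExists g u lam) :
    3 ≤ u ∧ 1 ≤ lam ∧ lam ≤ g * (u - 2) ∧
      2 ∣ lam * g * (u - 1) ∧ 6 ∣ lam * g ^ 2 * u * (u - 1) ∧ lam ∣ g * (u - 2) := by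
  obtain ⟨X, Gr, N, Bs, hN, hNlam, ⟨hgcard, hpart⟩, hGDD, hdisj⟩ := h
  have hgu2 : 0 < g * (u - 2) := hNlam ▸ Nat.mul_pos hN hlam
  have hg : 0 < g := by
    rcases Nat.eq_zero_or_pos g with h0 | h0
    · simp [h0] at hgu2
    · exact h0
  have hu2 : 0 < u - 2 := by
    rcases Nat.eq_zero_or_pos (u - 2) with h0 | h0
    · simp [h0] at hgu2
    · exact h0
  have hu : 3 ≤ u := by omega
  -- the distinguished GDD
  set B : Finset (Finset X) := Bs ⟨0, hN⟩ with hBdef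
  obtain ⟨hB1, hB2⟩ := hGDD ⟨0, hN⟩
  -- the whole point set as a Finset
  set allX : Finset X := Finset.univ.biUnion Gr with hallXdef
  have hmemall : ∀ x : X, x ∈ allX := fun x =>
    mem_biUnion.2 ⟨(hpart x).choose, mem_univ _, (hpart x).choose_spec.1⟩
  have hGrsub : ∀ i, Gr i ⊆ allX := fun i x _ => hmemall x
  have hdisjGr : ∀ i j : Fin u, i ≠ j → Disjoint (Gr i) (Gr j) := by
    intro i j hij
    refine Finset.disjoint_left.2 fun x hxi hxj => hij ?_
    exact ((hpart x).unique hxi hxj)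
  have hallXcard : allX.card = g * u := by
    rw [hallXdef, Finset.card_biUnion (fun i _ j _ hij => hdisjGr i j hij)]
    simp [hgcard, mul_comm]
  -- every block is a subset of allX, every non-x point of a block containing x
  -- lies in a different group
  have hblock3 : ∀ b ∈ B, b.card = 3 := fun b hb => (hB1 b hb).1
  -- key replication counting
  have key : ∀ (x : X) (i : Fin u), x ∈ Gr i →
      2 * (B.filter (fun b => x ∈ b)).card = lam * (g * (u - 1)) := by
    intro x i hxi
    set S : Finset X := allX \ Gr i with hSdef
    have hScard : S.card = g * (u - 1) := by
      rw [hSdef, Finset.card_sdiff_of_subset (hGrsub i), hallXcard, hgcard i, Nat.mul_sub]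
      ring_nf
    have hRHS : ∀ y ∈ S, ((B : Finset (Finset X)).filter
        (fun b => x ∈ b ∧ y ∈ b)).card = lam := by
      intro y hy
      have hyGr : y ∉ Gr i := (Finset.mem_sdiff.1 hy).2
      have hxy : x ≠ y := fun e => hyGr (e ▸ hxi)
      have hsep : ∀ j, ¬(x ∈ Gr j ∧ y ∈ Gr j) := by
        intro j ⟨hxj, hyj⟩
        exact hyGr (((hpart x).unique hxj hxi) ▸ hyj)
      have := hB2 x y hxy hsep
      rwa [← Finset.filter_val, Finset.card_val] at this
    -- double counting
    have hswap : ∑ y ∈ S, (B.filter (fun b => x ∈ b ∧ y ∈ b)).card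
        = ∑ b ∈ B, (if x ∈ b then 2 else 0) := by
      have h1 : ∀ y ∈ S, (B.filter (fun b => x ∈ b ∧ y ∈ b)).card
          = ∑ b ∈ B, (if x ∈ b ∧ y ∈ b then 1 else 0) := by
        intro y _; rw [Finset.card_filter]
      rw [Finset.sum_congr rfl h1, Finset.sum_comm]
      refine Finset.sum_congr rfl fun b hb => ?_
      by_cases hxb : x ∈ b
      · have hsum : ∑ y ∈ S, (if x ∈ b ∧ y ∈ b then 1 else 0)
            = (S.filter (fun y => y ∈ b)).card := by
          rw [Finset.card_filter]
          exact Finset.sum_congr rfl fun y _ => by simp [hxb]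
        have hfe : S.filter (fun y => y ∈ b) = b.erase x := by
          ext y
          simp only [Finset.mem_filter, Finset.mem_erase, hSdef, Finset.mem_sdiff]
          constructor
          · rintro ⟨⟨_, hyGr⟩, hyb⟩
            exact ⟨fun e => hyGr (e ▸ hxi), hyb⟩
          · rintro ⟨hyx, hyb⟩
            refine ⟨⟨hmemall y, fun hyGr => ?_⟩, hyb⟩
            have hsub : {x, y} ⊆ b ∩ Gr i := by
              intro z hz
              rcases Finset.mem_insert.1 hz with rfl | hz
              · exact Finset.mem_inter.2 ⟨hxb, hxi⟩
              · exact Finset.mem_inter.2 ⟨Finset.mem_singleton.1 hz ▸ hyb,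
                  Finset.mem_singleton.1 hz ▸ hyGr⟩
            have h2 : ({x, y} : Finset X).card = 2 := by
              rw [Finset.card_insert_of_notMem (by simp [Ne.symm hyx]),
                Finset.card_singleton]
            have := Finset.card_le_card hsub
            have := (hB1 b hb).2 i
            omega
        rw [hsum, hfe, Finset.card_erase_of_mem hxb, hblock3 b hb]
        simp [hxb]
      · simp [hxb]
    have hRHSsum : ∑ y ∈ S, (B.filter (fun b => x ∈ b ∧ y ∈ b)).card
        = lam * (g * (u - 1)) := by
      rw [Finset.sum_congr rfl hRHS, Finset.sum_const, hScard, smul_eq_mul, mul_comm]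
    rw [← hRHSsum, hswap, Finset.card_filter, Finset.mul_sum]
    exact Finset.sum_congr rfl fun b _ => by split <;> simp
  -- pick a point
  obtain ⟨x0, hx0⟩ := Finset.card_pos.1 (by rw [hgcard ⟨0, by omega⟩]; exact hg)
  have hrep := key x0 _ hx0
  refine ⟨hu, hlam, ?_, ⟨(B.filter (fun b => x0 ∈ b)).card, ?_⟩, ?_, ⟨N, by
    rw [← hNlam, Nat.mul_comm]⟩⟩
  · calc lam ≤ N * lam := Nat.le_mul_of_pos_left lam hN
      _ = g * (u - 2) := hNlam
  · calc lam * g * (u - 1) = lam * (g * (u - 1)) := by ring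
      _ = 2 * (B.filter (fun b => x0 ∈ b)).card := hrep.symm
  -- total counting
  · have hsumall : ∑ x ∈ allX, 2 * (B.filter (fun b => x ∈ b)).card
        = lam * (g * (u - 1)) * (g * u) := by
      have : ∀ x ∈ allX, 2 * (B.filter (fun b => x ∈ b)).card
          = lam * (g * (u - 1)) := fun x _ =>
        key x (hpart x).choose (hpart x).choose_spec.1
      rw [Finset.sum_congr rfl this, Finset.sum_const, hallXcard, smul_eq_mul]
      ring
    have hblocks : ∑ x ∈ allX, 2 * (B.filter (fun b => x ∈ b)).card
        = 6 * B.card := by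
      rw [← Finset.mul_sum]
      have h1 : ∀ x ∈ allX, (B.filter (fun b => x ∈ b)).card
          = ∑ b ∈ B, (if x ∈ b then 1 else 0) := fun x _ => Finset.card_filter ..
      rw [Finset.sum_congr rfl h1, Finset.sum_comm]
      have h2 : ∀ b ∈ B, ∑ x ∈ allX, (if x ∈ b then 1 else 0) = 3 := by
        intro b hb
        rw [← Finset.card_filter]
        have : allX.filter (fun x => x ∈ b) = b := by
          ext y; simp only [Finset.mem_filter]
          exact ⟨fun h => h.2, fun h => ⟨hmemall y, h⟩⟩
        rw [this, hblock3 b hb]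
      rw [Finset.sum_congr rfl h2, Finset.sum_const, smul_eq_mul]
      ring
    refine ⟨B.card, ?_⟩
    have : lam * (g * (u - 1)) * (g * u) = 6 * B.card := by rw [← hsumall, hblocks]
    calc lam * g ^ 2 * u * (u - 1) = lam * (g * (u - 1)) * (g * u) := by ring
      _ = 6 * B.card := this
end

section
/- If there exist a (3,λ)-LGDD of type g^u and integers such that g(u−2) ≡ 0 (mod λ), then for any positive integer m there exists a (3,λ)-LGDD of type (gm)^u. -/
open Finset
open scoped Classical

/-!
Inflation by a finite abelian group `A` of order `m`: replace each point `x` by the points `(x, a)`,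
`a ∈ A`, and each block `{x, y, z}` by the `m²` blocks `{(x, a), (y, b), (z, d)}` with
`a + b + d = c`, one family for every `c ∈ A`. Given two points of `{x, y, z}` and their labels, the
third label is forced, so pairs from distinct groups keep multiplicity `λ`. A lifted block remembers
both the block it lies over and its label sum `c`, so the `N · m` families obtained from the `N`
disjoint GDDs and the `m` values of `c` are pairwise disjoint.
-/

variable {X A : Type}

theorem Fintype.eq_of_sum_eq_of_forall_ne [AddCancelCommMonoid A] {ι : Type} [Fintype ι]
    {f f' : ι → A} (i : ι) (hsum : ∑ j, f j = ∑ j, f' j) (h : ∀ j ≠ i, f j = f' j) : f = f' := by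
  have hrest : ∑ j ∈ {i}ᶜ, f j = ∑ j ∈ {i}ᶜ, f' j :=
    Finset.sum_congr rfl fun j hj => h j (by simpa using hj)
  have hi : f i = f' i := by
    rw [Fintype.sum_eq_add_sum_compl i f, Fintype.sum_eq_add_sum_compl i f', hrest] at hsum
    exact add_right_cancel hsum
  funext j
  by_cases hj : j = i
  · exact hj ▸ hi
  · exact h j hj

theorem Finset.exists_eq_triple_of_card_eq_three {b : Finset X} (h3 : b.card = 3) {x y : X}
    (hx : x ∈ b) (hy : y ∈ b) (hxy : x ≠ y) : ∃ z, z ≠ x ∧ z ≠ y ∧ b = {x, y, z} := by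
  have hy' : y ∈ b.erase x := mem_erase.2 ⟨hxy.symm, hy⟩
  obtain ⟨z, hz⟩ := card_eq_one.1 <| show ((b.erase x).erase y).card = 1 by
    rw [card_erase_of_mem hy', card_erase_of_mem hx, h3]
  have hzb : z ∈ (b.erase x).erase y := hz ▸ mem_singleton_self z
  simp only [mem_erase] at hzb
  refine ⟨z, hzb.2.1, hzb.1, ?_⟩
  rw [← insert_erase hx, ← insert_erase hy', hz]

noncomputable def liftBlock (b : Finset X) (t : b → A) : Finset (X × A) :=
  b.attach.image fun w => (w.1, t w)

section liftBlock

variable {b : Finset X} {t : b → A}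

theorem mem_liftBlock {x : X} {a : A} : (x, a) ∈ liftBlock b t ↔ ∃ hx : x ∈ b, t ⟨x, hx⟩ = a := by
  simp [liftBlock]

theorem image_fst_liftBlock : (liftBlock b t).image Prod.fst = b := by
  rw [liftBlock, image_image]
  exact b.attach_image_val

theorem injOn_fst_liftBlock : Set.InjOn Prod.fst (liftBlock b t : Set (X × A)) := by
  rintro ⟨x, a⟩ hp ⟨y, e⟩ hq (rfl : x = y)
  obtain ⟨hx, rfl⟩ := mem_liftBlock.1 hp
  obtain ⟨-, rfl⟩ := mem_liftBlock.1 hq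
  rfl

theorem card_liftBlock : (liftBlock b t).card = b.card := by
  rw [← card_image_of_injOn injOn_fst_liftBlock, image_fst_liftBlock]

theorem sum_snd_liftBlock [AddCommMonoid A] : ∑ p ∈ liftBlock b t, p.2 = ∑ w, t w := by
  rw [liftBlock, sum_image fun v _ w _ h => Subtype.ext (congrArg Prod.fst h), univ_eq_attach]

theorem card_le_card_of_subset_liftBlock {s : Finset (X × A)} (hs : s ⊆ liftBlock b t)
    {G : Finset X} (hG : ∀ p ∈ s, p.1 ∈ G) : s.card ≤ G.card :=
  card_le_card_of_injOn Prod.fst hG (injOn_fst_liftBlock.mono hs)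

end liftBlock

theorem existsUnique_lift_of_card_eq_three [AddCommGroup A] {b : Finset X} (h3 : b.card = 3)
    {x y : X} (hx : x ∈ b) (hy : y ∈ b) (hxy : x ≠ y) (a e c : A) :
    ∃! t : b → A, ∑ w, t w = c ∧ t ⟨x, hx⟩ = a ∧ t ⟨y, hy⟩ = e := by
  obtain ⟨z, hzx, hzy, hb⟩ := exists_eq_triple_of_card_eq_three h3 hx hy hxy
  have hz : z ∈ b := by simp [hb]
  set f : b → A := fun w => if w.1 = x then a else e
  -- prescribe `a` at `x`, `e` at `y`, and correct the value at `z` so that the sum is `c`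
  refine ⟨f + Pi.single ⟨z, hz⟩ (c - ∑ w, f w), ⟨?_, ?_, ?_⟩, ?_⟩
  · simp [sum_add_distrib]
  · simp [f, Subtype.ext_iff, hzx.symm]
  · simp [f, Subtype.ext_iff, hzy.symm, hxy.symm]
  · rintro t ⟨hsum, rfl, rfl⟩
    refine Fintype.eq_of_sum_eq_of_forall_ne ⟨z, hz⟩ (by rw [hsum]; simp [sum_add_distrib]) ?_
    rintro ⟨w, hw⟩ hwz
    have hwz' : w ≠ z := fun h => hwz (Subtype.ext h)
    have : w = x ∨ w = y := by simpa [hb, hwz'] using hw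
    rcases this with rfl | rfl <;> simp [f, hwz, hxy.symm]

noncomputable def liftFamily [AddCommGroup A] [Fintype A] (Bs : Finset (Finset X)) (c : A) :
    Finset (Finset (X × A)) :=
  (Bs.sigma fun b => univ.filter fun t : b → A => ∑ w, t w = c).image fun p => liftBlock p.1 p.2

section liftFamily

variable [AddCommGroup A] [Fintype A] {Bs : Finset (Finset X)} {c : A}

theorem mem_liftFamily {B : Finset (X × A)} :
    B ∈ liftFamily Bs c ↔ ∃ b ∈ Bs, ∃ t : b → A, ∑ w, t w = c ∧ liftBlock b t = B := by
  simp only [liftFamily, mem_image, mem_sigma, mem_filter, mem_univ, true_and, Sigma.exists,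
    and_assoc]
  exact ⟨fun ⟨b, t, hb, h⟩ => ⟨b, hb, t, h⟩, fun ⟨b, hb, t, h⟩ => ⟨b, t, hb, h⟩⟩

theorem image_fst_mem_and_sum_snd_of_mem_liftFamily {B : Finset (X × A)}
    (hB : B ∈ liftFamily Bs c) : B.image Prod.fst ∈ Bs ∧ ∑ p ∈ B, p.2 = c := by
  obtain ⟨b, hb, t, hsum, rfl⟩ := mem_liftFamily.1 hB
  rw [image_fst_liftBlock, sum_snd_liftBlock]
  exact ⟨hb, hsum⟩

theorem disjoint_liftFamily {Bs' : Finset (Finset X)} {c' : A} (h : Disjoint Bs Bs' ∨ c ≠ c') :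
    Disjoint (liftFamily Bs c) (liftFamily Bs' c') := by
  refine disjoint_left.2 fun B hB hB' => ?_
  obtain ⟨hb, hc⟩ := image_fst_mem_and_sum_snd_of_mem_liftFamily hB
  obtain ⟨hb', hc'⟩ := image_fst_mem_and_sum_snd_of_mem_liftFamily hB'
  rcases h with h | h
  · exact disjoint_left.1 h hb hb'
  · exact h (hc.symm.trans hc')

theorem card_filter_liftFamily (h3 : ∀ b ∈ Bs, b.card = 3) {x y : X} (hxy : x ≠ y) (a e : A) :
    ((liftFamily Bs c).filter fun B => (x, a) ∈ B ∧ (y, e) ∈ B).card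
      = (Bs.filter fun b => x ∈ b ∧ y ∈ b).card := by
  refine card_nbij (fun B => B.image Prod.fst) ?_ ?_ ?_
  · intro B hB
    simp only [coe_filter, Set.mem_ofPred_eq, mem_liftFamily] at hB ⊢
    obtain ⟨⟨b, hb, t, -, rfl⟩, hxa, hye⟩ := hB
    rw [image_fst_liftBlock]
    exact ⟨hb, (mem_liftBlock.1 hxa).1, (mem_liftBlock.1 hye).1⟩
  · intro B hB B' hB' hBB'
    simp only [coe_filter, Set.mem_ofPred_eq, mem_liftFamily] at hB hB'
    obtain ⟨⟨b, hb, t, hsum, rfl⟩, hxa, hye⟩ := hB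
    obtain ⟨⟨b', -, t', hsum', rfl⟩, hxa', hye'⟩ := hB'
    obtain rfl : b = b' := by simpa only [image_fst_liftBlock] using hBB'
    obtain ⟨hx, hta⟩ := mem_liftBlock.1 hxa
    obtain ⟨hy, hte⟩ := mem_liftBlock.1 hye
    obtain ⟨_, hta'⟩ := mem_liftBlock.1 hxa'
    obtain ⟨_, hte'⟩ := mem_liftBlock.1 hye'
    exact congrArg _ <| (existsUnique_lift_of_card_eq_three (h3 b hb) hx hy hxy a e c).unique
      ⟨hsum, hta, hte⟩ ⟨hsum', hta', hte'⟩
  · intro b hb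
    simp only [coe_filter, Set.mem_ofPred_eq] at hb
    obtain ⟨hb, hx, hy⟩ := hb
    obtain ⟨t, ⟨hsum, hta, hte⟩, -⟩ := existsUnique_lift_of_card_eq_three (h3 b hb) hx hy hxy a e c
    refine ⟨liftBlock b t, ?_, image_fst_liftBlock⟩
    simp only [coe_filter, Set.mem_ofPred_eq, mem_liftFamily]
    exact ⟨⟨b, hb, t, hsum, rfl⟩, mem_liftBlock.2 ⟨hx, hta⟩, mem_liftBlock.2 ⟨hy, hte⟩⟩

end liftFamily

theorem IsGroupPartition.product_univ [Fintype A] {g u : ℕ} {Gr : Fin u → Finset X}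
    (h : IsGroupPartition g u Gr) :
    IsGroupPartition (g * Fintype.card A) u fun i => Gr i ×ˢ (univ : Finset A) := by
  refine ⟨fun i => by rw [card_product, h.1 i, card_univ], fun p => ?_⟩
  simpa using h.2 p.1

theorem IsGDDBlocks.lift [AddCommGroup A] [Fintype A] {u lam : ℕ} {Gr : Fin u → Finset X}
    {Bs : Finset (Finset X)} (hcover : ∀ x, ∃ i, x ∈ Gr i) (hB : IsGDDBlocks lam Gr Bs.val)
    (c : A) : IsGDDBlocks lam (fun i => Gr i ×ˢ (univ : Finset A)) (liftFamily Bs c).val := by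
  have h3 : ∀ b ∈ Bs, b.card = 3 := fun b hb => (hB.1 b hb).1
  constructor
  · intro B hB'
    obtain ⟨b, hb, t, -, rfl⟩ := mem_liftFamily.1 hB'
    refine ⟨card_liftBlock.trans (h3 b hb), fun i => ?_⟩
    refine (card_le_card_of_subset_liftBlock (t := t) (fun p hp => ?_) fun p hp => ?_).trans
      ((hB.1 b hb).2 i)
    · simp only [mem_inter] at hp
      exact hp.1
    · simp only [mem_inter, mem_product] at hp ⊢
      exact ⟨(mem_liftBlock.1 hp.1).1, hp.2.1⟩
  · rintro ⟨x, a⟩ ⟨y, e⟩ - hsep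
    have hsep' : ∀ i, ¬(x ∈ Gr i ∧ y ∈ Gr i) := fun i hi => hsep i (by simpa using hi)
    have hxy : x ≠ y := by
      rintro rfl
      obtain ⟨i, hi⟩ := hcover x
      exact hsep' i ⟨hi, hi⟩
    -- `IsGDDBlocks` was stated with the classical decidability instances
    have hcount := card_filter_liftFamily (c := c) h3 hxy a e
    rw [card_def, card_def, filter_val, filter_val] at hcount
    rw [← hB.2 x y hxy hsep']
    convert hcount

theorem LGDDExists.mul_card (A : Type) [AddCommGroup A] [Fintype A] {g u lam : ℕ}
    (h : LGDDExists g u lam) : LGDDExists (g * Fintype.card A) u lam := by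
  obtain ⟨X, Gr, N, Bs, hN, hNlam, hGr, hGDD, hdisj⟩ := h
  let e : Fin (N * Fintype.card A) ≃ Fin N × A :=
    finProdFinEquiv.symm.trans ((Equiv.refl _).prodCongr (Fintype.equivFin A).symm)
  refine ⟨X × A, _, _, fun r => liftFamily (Bs (e r).1) (e r).2, Nat.mul_pos hN Fintype.card_pos,
    by rw [mul_right_comm, hNlam]; ring, hGr.product_univ,
    fun r => (hGDD _).lift (fun x => (hGr.2 x).exists) _, fun r s hrs => ?_⟩
  refine disjoint_liftFamily ?_
  by_cases h1 : (e r).1 = (e s).1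
  · exact Or.inr fun h2 => hrs (e.injective (Prod.ext h1 h2))
  · exact Or.inl (hdisj _ _ h1)

theorem LGDD_inflate_general (g u lam : ℕ) (h : LGDDExists g u lam) :
    ∀ m : ℕ, 0 < m → LGDDExists (g * m) u lam := by
  intro m hm
  have : NeZero m := ⟨hm.ne'⟩
  simpa using h.mul_card (ZMod m)

/-- Inflation: a (3,λ)-LGDD of type g^u gives a (3,λ)-LGDD of type (gm)^u for
any positive integer m. -/
theorem LGDD_inflate (g u lam : ℕ) (h : LGDDExists g u lam)
    (hdvd : lam ∣ g * (u - 2)) :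
    ∀ m : ℕ, 0 < m → LGDDExists (g * m) u lam :=
  LGDD_inflate_general g u lam h
end
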